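/- arXiv:2208.11879 — 6 statements merged into one kernel-verified Lean document; each statement's English description precedes it below -/
import Mathlib

section
/- Let (r_k)_{k≥0} and (d_k)_{k≥0} be positive real sequences, let (a_k)_{k≥-1} be a non-increasing positive real sequence, and let L, A, C be positive constants such that for all k ≥ 0 one has (a_k/2)·r_k ≤ (1 + a_k²·L·A)·d_k − d_{k+1} + (L·C·a_k²)/2. Define the weighting sequence W_{-1} = 1 and W_k = W_{k-1}·a_k/(a_{k-1}·(1 + L·A·a_k²)) for k ≥ 0. Then for every K ≥ 1, min_{0 ≤ k ≤ K-1} r_k ≤ 2·d_0/(a_{-1}·K·W_{K-1}) + (L·C/(K·W_{K-1}))·∑_{k=0}^{K-1} a_k·W_k. -/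
/-!
Multiplying the `k`-th inequality by `W_k / a_k` turns `(1 + L A a_k²) d_k` into
`(W_{k-1} / a_{k-1}) d_k`, because `W_k (1 + L A a_k²) / a_k = W_{k-1} / a_{k-1}`; so the
weighted inequalities telescope to `∑ W_k r_k / 2 ≤ d_0 / a_{-1} + L C ∑ a_k W_k / 2`.
The minimum of `r` is at most its `W`-weighted average, and since `W` is non-increasing,
`∑_{k<K} W_k ≥ K W_{K-1}`.
-/

open Finset

/-- `v₀` plays the role of `v (-1)`. -/
theorem sum_mul_add_mul_le_of_le_mul_sub_add {c d e s v : ℕ → ℝ} {v₀ : ℝ}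
    (hv : ∀ k, 0 ≤ v k) (hv₀ : v 0 * c 0 = v₀) (hvc : ∀ k, v (k + 1) * c (k + 1) = v k)
    (h : ∀ k, s k ≤ c k * d k - d (k + 1) + e k) (n : ℕ) :
    ∑ k ∈ range (n + 1), v k * s k + v n * d (n + 1) ≤
      v₀ * d 0 + ∑ k ∈ range (n + 1), v k * e k := by
  have step (k : ℕ) : v k * s k + v k * d (k + 1) ≤ v k * c k * d k + v k * e k := by
    nlinarith [mul_le_mul_of_nonneg_left (h k) (hv k)]
  induction n with
  | zero => simpa [← hv₀] using step 0
  | succ n ih =>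
    rw [← hvc n] at ih
    rw [sum_range_succ, sum_range_succ _ (n + 1)]
    linarith [step (n + 1)]

theorem ciInf_mul_sum_le_sum_mul {K : ℕ} [NeZero K] {r w : ℕ → ℝ} (hw : ∀ k, 0 ≤ w k) :
    (⨅ k : Fin K, r k) * ∑ k ∈ range K, w k ≤ ∑ k ∈ range K, w k * r k := by
  rw [mul_sum]
  refine sum_le_sum fun k hk => ?_
  rw [mul_comm]
  exact mul_le_mul_of_nonneg_left
    (ciInf_le (Finite.bddBelow_range _) (⟨k, mem_range.mp hk⟩ : Fin K)) (hw k)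

theorem pos_of_mul_pos_succ {W q : ℕ → ℝ} (hW₀ : 0 < W 0) (hq : ∀ k, 0 < q k)
    (hW : ∀ k, W (k + 1) = W k * q k) (k : ℕ) : 0 < W k := by
  induction k with
  | zero => exact hW₀
  | succ k ih => rw [hW]; exact mul_pos ih (hq k)

theorem antitone_of_mul_le_one_succ {W q : ℕ → ℝ} (hW : ∀ k, W (k + 1) = W k * q k)
    (hWpos : ∀ k, 0 ≤ W k) (hq : ∀ k, q k ≤ 1) : Antitone W :=
  antitone_nat_of_succ_le fun k => by
    rw [hW]; exact mul_le_of_le_one_right (hWpos k) (hq k)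

theorem card_mul_le_sum_range_of_antitone {W : ℕ → ℝ} (hW : Antitone W) (n : ℕ) :
    ((n + 1 : ℕ) : ℝ) * W n ≤ ∑ k ∈ range (n + 1), W k := by
  simpa using card_nsmul_le_sum (range (n + 1)) W (W n)
    fun k hk => hW (Nat.lt_succ_iff.mp (mem_range.mp hk))

theorem ciInf_mul_card_mul_le_sum_mul {r W : ℕ → ℝ} (hr : ∀ k, 0 ≤ r k) (hWpos : ∀ k, 0 < W k)
    (hW : Antitone W) (n : ℕ) :
    (⨅ k : Fin (n + 1), r k) * (((n + 1 : ℕ) : ℝ) * W n) ≤ ∑ k ∈ range (n + 1), W k * r k :=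
  (mul_le_mul_of_nonneg_left (card_mul_le_sum_range_of_antitone hW n)
    (le_ciInf fun k : Fin (n + 1) => hr k)).trans (ciInf_mul_sum_le_sum_mul fun k => (hWpos k).le)

/-- `W k` is the paper's `W_k`, with `aneg` in the role of `a_{-1}` and `W_{-1} = 1`. -/
structure IsWeighting (a : ℕ → ℝ) (aneg L A : ℝ) (W : ℕ → ℝ) : Prop where
  zero : W 0 = 1 * (a 0 / (aneg * (1 + L * A * (a 0) ^ 2)))
  succ : ∀ k, W (k + 1) = W k * (a (k + 1) / (a k * (1 + L * A * (a (k + 1)) ^ 2)))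

namespace IsWeighting

variable {a W : ℕ → ℝ} {aneg L A : ℝ}

theorem one_add_pos (ha : ∀ k, 0 < a k) (hL : 0 < L) (hA : 0 < A) (k : ℕ) :
    0 < 1 + L * A * a k ^ 2 := by
  have := ha k; positivity

theorem pos (hW : IsWeighting a aneg L A W) (ha : ∀ k, 0 < a k) (hL : 0 < L) (hA : 0 < A)
    (haneg : 0 < aneg) (k : ℕ) : 0 < W k :=
  pos_of_mul_pos_succ
    (by rw [hW.zero]; have := ha 0; have := one_add_pos ha hL hA 0; positivity)
    (fun k => div_pos (ha _) (mul_pos (ha k) (one_add_pos ha hL hA _))) hW.succ k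

theorem antitone (hW : IsWeighting a aneg L A W) (ha : ∀ k, 0 < a k) (hL : 0 < L)
    (hA : 0 < A) (haneg : 0 < aneg) (ha_mono : ∀ k, a (k + 1) ≤ a k) : Antitone W :=
  antitone_of_mul_le_one_succ hW.succ (fun k => (hW.pos ha hL hA haneg k).le) fun k =>
    (div_le_one (mul_pos (ha k) (one_add_pos ha hL hA _))).2
      (by nlinarith [ha_mono k, ha k, mul_pos (mul_pos hL hA) (pow_pos (ha (k + 1)) 2)])

theorem sum_mul_le {r d : ℕ → ℝ} {C : ℝ} (hW : IsWeighting a aneg L A W) (ha : ∀ k, 0 < a k)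
    (hL : 0 < L) (hA : 0 < A) (haneg : 0 < aneg) (hd : ∀ k, 0 < d k)
    (hineq : ∀ k, a k / 2 * r k ≤
      (1 + (a k) ^ 2 * L * A) * d k - d (k + 1) + L * C * (a k) ^ 2 / 2) (n : ℕ) :
    ∑ k ∈ range (n + 1), W k * r k ≤
      2 * d 0 / aneg + L * C * ∑ k ∈ range (n + 1), a k * W k := by
  have hWpos := hW.pos ha hL hA haneg
  have htel := sum_mul_add_mul_le_of_le_mul_sub_add (v := fun k => W k / a k)
    (v₀ := 1 / aneg) (fun k => (div_pos (hWpos k) (ha k)).le)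
    (by rw [hW.zero]; field_simp [(ha 0).ne', (one_add_pos ha hL hA 0).ne'])
    (fun k => by
      simp only [hW.succ k]
      field_simp [(ha k).ne', (ha (k + 1)).ne', (one_add_pos ha hL hA (k + 1)).ne'])
    hineq n
  have hsum_r : ∑ k ∈ range (n + 1), W k / a k * (a k / 2 * r k) =
      (∑ k ∈ range (n + 1), W k * r k) / 2 := by
    rw [sum_div]; exact sum_congr rfl fun k _ => by field_simp [(ha k).ne']
  have hsum_e : ∑ k ∈ range (n + 1), W k / a k * (L * C * a k ^ 2 / 2) =
      L * C * (∑ k ∈ range (n + 1), a k * W k) / 2 := by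
    rw [mul_sum, sum_div]; exact sum_congr rfl fun k _ => by field_simp [(ha k).ne']
  have hlast : 0 ≤ W n / a n * d (n + 1) := by
    have := hWpos n; have := ha n; have := hd (n + 1); positivity
  rw [hsum_r, hsum_e, one_div_mul_eq_div] at htel
  linarith [mul_div_assoc 2 (d 0) aneg]

end IsWeighting

theorem brsgd_weighting_lemma_min_general
    (r d a : ℕ → ℝ) (aneg : ℝ) (L A C : ℝ)
    (hr : ∀ k, 0 < r k) (hd : ∀ k, 0 < d k)
    (ha : ∀ k, 0 < a k) (haneg : 0 < aneg)
    (ha_mono : ∀ k, a (k + 1) ≤ a k)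
    (hL : 0 < L) (hA : 0 < A)
    (hineq : ∀ k, a k / 2 * r k ≤
      (1 + (a k) ^ 2 * L * A) * d k - d (k + 1) + L * C * (a k) ^ 2 / 2)
    (W : ℕ → ℝ)
    (hW0 : W 0 = 1 * (a 0 / (aneg * (1 + L * A * (a 0) ^ 2))))
    (hW : ∀ k, W (k + 1) = W k * (a (k + 1) / (a k * (1 + L * A * (a (k + 1)) ^ 2))))
    (K : ℕ) (hK : 1 ≤ K) :
    (⨅ k : Fin K, r k) ≤
      2 * d 0 / (aneg * (K : ℝ) * W (K - 1)) +
        L * C / ((K : ℝ) * W (K - 1)) * ∑ k ∈ Finset.range K, a k * W k := by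
  obtain ⟨n, rfl⟩ := Nat.exists_eq_add_of_le' hK
  rw [Nat.add_sub_cancel]
  have hWeight : IsWeighting a aneg L A W := ⟨hW0, hW⟩
  have hKW : 0 < ((n + 1 : ℕ) : ℝ) * W n := by
    have := hWeight.pos ha hL hA haneg n; positivity
  calc (⨅ k : Fin (n + 1), r k)
      ≤ (2 * d 0 / aneg + L * C * ∑ k ∈ range (n + 1), a k * W k) /
          (((n + 1 : ℕ) : ℝ) * W n) := by
        rw [le_div_iff₀ hKW]
        exact (ciInf_mul_card_mul_le_sum_mul (fun k => (hr k).le)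
          (hWeight.pos ha hL hA haneg) (hWeight.antitone ha hL hA haneg ha_mono) n).trans
          (hWeight.sum_mul_le ha hL hA haneg hd hineq n)
    _ = _ := by field_simp

/-- Lemma 1 of the paper.
`a` is indexed so that `aneg` plays the role of `a_{-1}`; the weighting sequence
satisfies `W_{-1} = 1`, i.e. `W 0 = a 0 / (aneg * (1 + L * A * (a 0)^2))`. -/
theorem brsgd_weighting_lemma_min
    (r d a : ℕ → ℝ) (aneg : ℝ) (L A C : ℝ)
    (hr : ∀ k, 0 < r k) (hd : ∀ k, 0 < d k)
    (ha : ∀ k, 0 < a k) (haneg : 0 < aneg)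
    (ha_mono0 : a 0 ≤ aneg) (ha_mono : ∀ k, a (k + 1) ≤ a k)
    (hL : 0 < L) (hA : 0 < A) (hC : 0 < C)
    (hineq : ∀ k, a k / 2 * r k ≤
      (1 + (a k) ^ 2 * L * A) * d k - d (k + 1) + L * C * (a k) ^ 2 / 2)
    (W : ℕ → ℝ)
    (hW0 : W 0 = 1 * (a 0 / (aneg * (1 + L * A * (a 0) ^ 2))))
    (hW : ∀ k, W (k + 1) = W k * (a (k + 1) / (a k * (1 + L * A * (a (k + 1)) ^ 2))))
    (K : ℕ) (hK : 1 ≤ K) :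
    (⨅ k : Fin K, r k) ≤
      2 * d 0 / (aneg * (K : ℝ) * W (K - 1)) +
        L * C / ((K : ℝ) * W (K - 1)) * ∑ k ∈ Finset.range K, a k * W k :=
  brsgd_weighting_lemma_min_general r d a aneg L A C hr hd ha haneg ha_mono hL hA hineq W hW0 hW K
    hK
end

section
/- Let (r_k)_{k≥0} and (d_k)_{k≥0} be positive real sequences, let (a_k)_{k≥-1} be a non-increasing positive real sequence, and let L, A, C be positive constants such that for all k ≥ 0 one has (a_k/2)·r_k ≤ (1 + a_k²·L·A)·d_k − d_{k+1} + (L·C·a_k²)/2. Define the weighting sequence W_{-1} = 1 and W_k = W_{k-1}·a_k/(a_{k-1}·(1 + L·A·a_k²)) for k ≥ 0. Then for every K ≥ 1, the weighted average (∑_{k=0}^{K-1} r_k·W_k)/(∑_{k=0}^{K-1} W_k) satisfies (∑_{k=0}^{K-1} r_k·W_k)/(∑_{k=0}^{K-1} W_k) ≤ 2·d_0/(a_{-1}·K·W_{K-1}) + (L·C/(K·W_{K-1}))·∑_{k=0}^{K-1} a_k·W_k. -/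
/-!
Multiplying the `k`-th inequality by `2 W_k / a_k` and using the recursion
`W_k (1 + L A a_k²) / a_k = W_{k-1} / a_{k-1}` turns it into
`r_k W_k ≤ V_k - V_{k+1} + L C a_k W_k` for the potential `V_k = 2 W_{k-1} d_k / a_{k-1} ≥ 0`.
Summing telescopes to `∑ r_k W_k ≤ 2 d_0 / a_{-1} + L C ∑ a_k W_k`, and since `a` is
non-increasing so is `W`, whence `∑_{k<K} W_k ≥ K W_{K-1}`.
-/

open Finset

theorem sum_range_le_of_le_sub_add {α : Type*} [AddCommGroup α] [PartialOrder α]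
    [IsOrderedAddMonoid α] {f g V : ℕ → α} (h : ∀ k, f k ≤ V k - V (k + 1) + g k) (n : ℕ)
    (hV : 0 ≤ V n) : ∑ k ∈ range n, f k ≤ V 0 + ∑ k ∈ range n, g k :=
  calc ∑ k ∈ range n, f k ≤ ∑ k ∈ range n, (V k - V (k + 1) + g k) := sum_le_sum fun k _ => h k
    _ = V 0 - V n + ∑ k ∈ range n, g k := by rw [sum_add_distrib, sum_range_sub']
    _ ≤ V 0 + ∑ k ∈ range n, g k := by grw [sub_le_self _ hV]

theorem natCast_mul_le_sum_range_of_antitone {α : Type*} [Semiring α] [PartialOrder α]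
    [IsOrderedAddMonoid α] {W : ℕ → α} (hW : Antitone W) (K : ℕ) :
    (K : α) * W (K - 1) ≤ ∑ k ∈ range K, W k := by
  simpa [nsmul_eq_mul] using
    card_nsmul_le_sum (range K) W (W (K - 1)) fun i hi => hW (by grind)

theorem mul_le_of_weighted_step {a r d d' W ρ L A C : ℝ} (ha : 0 < a) (hW : 0 ≤ W)
    (hρ : W * (1 + L * A * a ^ 2) = ρ * a)
    (hstep : a / 2 * r ≤ (1 + a ^ 2 * L * A) * d - d' + L * C * a ^ 2 / 2) :
    r * W ≤ 2 * ρ * d - 2 * (W / a) * d' + L * C * (a * W) := by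
  have hmul := mul_le_mul_of_nonneg_left hstep (by positivity : 0 ≤ 2 * W / a)
  have hρ' : 2 * W / a * ((1 + a ^ 2 * L * A) * d) = 2 * ρ * d := by
    field_simp
    linear_combination d * hρ
  have hlhs : 2 * W / a * (a / 2 * r) = r * W := by field_simp
  have hrhs : 2 * W / a * ((1 + a ^ 2 * L * A) * d - d' + L * C * a ^ 2 / 2)
      = 2 * ρ * d - 2 * (W / a) * d' + L * C * (a * W) := by
    rw [mul_add, mul_sub, hρ']
    field_simp
  linarith

section Weights

variable {a W : ℕ → ℝ} {aneg L A : ℝ}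

/-- `prevRatio a W aneg k` is `W_{k-1} / a_{k-1}`, with `W_{-1} = 1` and `a_{-1} = aneg`. -/
noncomputable def prevRatio (a W : ℕ → ℝ) (aneg : ℝ) : ℕ → ℝ
  | 0 => 1 / aneg
  | k + 1 => W k / a k

variable (hW0 : W 0 = 1 * (a 0 / (aneg * (1 + L * A * (a 0) ^ 2))))
  (hW : ∀ k, W (k + 1) = W k * (a (k + 1) / (a k * (1 + L * A * (a (k + 1)) ^ 2))))
include hW0 hW

theorem weight_pos (ha : ∀ k, 0 < a k) (haneg : 0 < aneg) (hLA : 0 ≤ L * A) (k : ℕ) :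
    0 < W k := by
  induction k with
  | zero => rw [hW0]; have := ha 0; positivity
  | succ n ih => rw [hW n]; have := ha n; have := ha (n + 1); positivity

theorem weight_mul_eq_prevRatio_mul (ha : ∀ k, 0 < a k) (haneg : 0 < aneg) (hLA : 0 ≤ L * A)
    (k : ℕ) : W k * (1 + L * A * a k ^ 2) = prevRatio a W aneg k * a k := by
  have hden : 1 + a k ^ 2 * L * A ≠ 0 := by linarith [mul_nonneg (sq_nonneg (a k)) hLA]
  cases k with
  | zero => rw [hW0, prevRatio]; field_simp
  | succ n => rw [hW n, prevRatio]; have := (ha n).ne'; field_simp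

theorem weight_antitone (ha : ∀ k, 0 < a k) (ha_mono : ∀ k, a (k + 1) ≤ a k) (haneg : 0 < aneg)
    (hLA : 0 ≤ L * A) : Antitone W := by
  refine antitone_nat_of_succ_le fun k => ?_
  have hfactor : a (k + 1) / (a k * (1 + L * A * a (k + 1) ^ 2)) ≤ 1 := by
    have := ha k
    rw [div_le_one (by positivity)]
    nlinarith [ha_mono k, mul_nonneg (ha k).le (by positivity : 0 ≤ L * A * a (k + 1) ^ 2)]
  rw [hW k]
  exact mul_le_of_le_one_right (weight_pos hW0 hW ha haneg hLA k).le hfactor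

end Weights

theorem prevRatio_nonneg {a W : ℕ → ℝ} {aneg : ℝ} (ha : ∀ k, 0 < a k) (hW : ∀ k, 0 < W k)
    (haneg : 0 < aneg) (k : ℕ) : 0 ≤ prevRatio a W aneg k := by
  cases k with
  | zero => exact (one_div_pos.mpr haneg).le
  | succ n => exact (div_pos (hW n) (ha n)).le

theorem brsgd_weighting_lemma_avg_general
    (r d a : ℕ → ℝ) (aneg : ℝ) (L A C : ℝ)
    (hr : ∀ k, 0 < r k) (hd : ∀ k, 0 < d k)
    (ha : ∀ k, 0 < a k) (haneg : 0 < aneg)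
    (ha_mono : ∀ k, a (k + 1) ≤ a k)
    (hL : 0 < L) (hA : 0 < A)
    (hineq : ∀ k, a k / 2 * r k ≤
      (1 + (a k) ^ 2 * L * A) * d k - d (k + 1) + L * C * (a k) ^ 2 / 2)
    (W : ℕ → ℝ)
    (hW0 : W 0 = 1 * (a 0 / (aneg * (1 + L * A * (a 0) ^ 2))))
    (hW : ∀ k, W (k + 1) = W k * (a (k + 1) / (a k * (1 + L * A * (a (k + 1)) ^ 2))))
    (K : ℕ) (hK : 1 ≤ K) :
    (∑ k ∈ Finset.range K, r k * W k) / (∑ k ∈ Finset.range K, W k) ≤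
      2 * d 0 / (aneg * (K : ℝ) * W (K - 1)) +
        L * C / ((K : ℝ) * W (K - 1)) * ∑ k ∈ Finset.range K, a k * W k := by
  have hLA : 0 ≤ L * A := (mul_pos hL hA).le
  have hWpos := weight_pos hW0 hW ha haneg hLA
  have htelescope : ∑ k ∈ range K, r k * W k ≤
      2 * prevRatio a W aneg 0 * d 0 + ∑ k ∈ range K, L * C * (a k * W k) :=
    sum_range_le_of_le_sub_add (V := fun k => 2 * prevRatio a W aneg k * d k)
      (fun k => mul_le_of_weighted_step (ha k) (hWpos k).le
        (weight_mul_eq_prevRatio_mul hW0 hW ha haneg hLA k) (hineq k))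
      K (mul_nonneg (mul_nonneg zero_le_two (prevRatio_nonneg ha hWpos haneg K)) (hd K).le)
  have hcount := natCast_mul_le_sum_range_of_antitone
    (weight_antitone hW0 hW ha ha_mono haneg hLA) K
  have hKpos : (0 : ℝ) < K * W (K - 1) := by
    have := hWpos (K - 1); have : (1 : ℝ) ≤ K := by exact_mod_cast hK
    positivity
  calc (∑ k ∈ range K, r k * W k) / (∑ k ∈ range K, W k)
      ≤ (2 * prevRatio a W aneg 0 * d 0 + ∑ k ∈ range K, L * C * (a k * W k)) / (K * W (K - 1)) :=
        div_le_div₀ ((sum_nonneg fun k _ => (mul_pos (hr k) (hWpos k)).le).trans htelescope)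
          htelescope hKpos hcount
    _ = _ := by
        rw [← mul_sum, prevRatio]
        field_simp

/-- Lemma 2 of the paper, weighted-average/random-iterate form.
`a` is indexed so that `aneg` plays the role of `a_{-1}`; the weighting sequence
satisfies `W_{-1} = 1`, i.e. `W 0 = a 0 / (aneg * (1 + L * A * (a 0)^2))`. -/
theorem brsgd_weighting_lemma_avg
    (r d a : ℕ → ℝ) (aneg : ℝ) (L A C : ℝ)
    (hr : ∀ k, 0 < r k) (hd : ∀ k, 0 < d k)
    (ha : ∀ k, 0 < a k) (haneg : 0 < aneg)
    (ha_mono0 : a 0 ≤ aneg) (ha_mono : ∀ k, a (k + 1) ≤ a k)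
    (hL : 0 < L) (hA : 0 < A) (hC : 0 < C)
    (hineq : ∀ k, a k / 2 * r k ≤
      (1 + (a k) ^ 2 * L * A) * d k - d (k + 1) + L * C * (a k) ^ 2 / 2)
    (W : ℕ → ℝ)
    (hW0 : W 0 = 1 * (a 0 / (aneg * (1 + L * A * (a 0) ^ 2))))
    (hW : ∀ k, W (k + 1) = W k * (a (k + 1) / (a k * (1 + L * A * (a (k + 1)) ^ 2))))
    (K : ℕ) (hK : 1 ≤ K) :
    (∑ k ∈ Finset.range K, r k * W k) / (∑ k ∈ Finset.range K, W k) ≤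
      2 * d 0 / (aneg * (K : ℝ) * W (K - 1)) +
        L * C / ((K : ℝ) * W (K - 1)) * ∑ k ∈ Finset.range K, a k * W k :=
  brsgd_weighting_lemma_avg_general r d a aneg L A C hr hd ha haneg ha_mono hL hA hineq W hW0 hW K
    hK
end

section
/- Let (r_k)_{k≥0} and (δ_k)_{k≥0} be nonnegative real sequences, let L, A', C' > 0, and let (α_k)_{k≥0} be a positive non-increasing real sequence with ∑_{k=0}^∞ α_k² < ∞ and lim_{K→∞} 1/(K·α_{K-1}) = 0. Suppose that for all k ≥ 0 one has (α_k/2)·r_k ≤ (1 + L·A'·α_k²)·δ_k − δ_{k+1} + (L·C'·α_k²)/2. Then lim_{K→∞} min_{0 ≤ k ≤ K-1} r_k = 0. -/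
/-!
A discrete Grönwall argument: the recursion amplifies by at most
`∏ (1 + L A' α_k²) ≤ exp (L A' ∑ α_k²) < ∞`, so the weighted sums `∑_{k<K} α_k r_k` stay bounded.
Since `α` is non-increasing, `K α_{K-1} min_{k<K} r_k ≤ ∑_{k<K} α_k r_k`, and the minimum is
squeezed to `0` by `1 / (K α_{K-1}) → 0`.
-/

open Finset Filter Real

theorem sum_add_le_exp_sum_mul {u δ a b : ℕ → ℝ} (hu : ∀ k, 0 ≤ u k) (hδ₀ : 0 ≤ δ 0)
    (ha : ∀ k, 0 ≤ a k) (hb : ∀ k, 0 ≤ b k)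
    (h : ∀ k, u k + δ (k + 1) ≤ (1 + a k) * δ k + b k) (K : ℕ) :
    ∑ k ∈ range K, u k + δ K ≤
      exp (∑ k ∈ range K, a k) * (δ 0 + ∑ k ∈ range K, b k) := by
  induction K with
  | zero => simp
  | succ K ih =>
    rw [sum_range_succ, sum_range_succ, sum_range_succ, exp_add]
    set U := ∑ k ∈ range K, u k
    set E := exp (∑ k ∈ range K, a k)
    set B := δ 0 + ∑ k ∈ range K, b k
    have hU : 0 ≤ U := sum_nonneg fun k _ => hu k
    have hE : 1 ≤ E := one_le_exp (sum_nonneg fun k _ => ha k)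
    have hB : 0 ≤ B := add_nonneg hδ₀ (sum_nonneg fun k _ => hb k)
    have hexp : 1 + a K ≤ exp (a K) := by linarith [add_one_le_exp (a K)]
    have hδK : δ K ≤ E * B - U := by linarith
    calc U + u K + δ (K + 1) ≤ U + (1 + a K) * δ K + b K := by linarith [h K]
      _ ≤ U + (1 + a K) * (E * B - U) + b K := by gcongr; linarith [ha K]
      _ = (1 + a K) * (E * B) - a K * U + b K := by ring
      _ ≤ exp (a K) * (E * B) + E * exp (a K) * b K := by
        have hgrowth : (1 + a K) * (E * B) ≤ exp (a K) * (E * B) :=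
          mul_le_mul_of_nonneg_right hexp (mul_nonneg (zero_le_one.trans hE) hB)
        have hb_le : b K ≤ E * exp (a K) * b K :=
          le_mul_of_one_le_left (hb K) (one_le_mul_of_one_le_of_one_le hE (one_le_exp (ha K)))
        linarith [mul_nonneg (ha K) hU]
      _ = E * exp (a K) * (δ 0 + (∑ k ∈ range K, b k + b K)) := by ring

theorem sum_range_le_exp_tsum_mul {u δ a b : ℕ → ℝ} (hu : ∀ k, 0 ≤ u k) (hδ : ∀ k, 0 ≤ δ k)
    (ha : ∀ k, 0 ≤ a k) (hb : ∀ k, 0 ≤ b k) (ha_sum : Summable a) (hb_sum : Summable b)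
    (h : ∀ k, u k + δ (k + 1) ≤ (1 + a k) * δ k + b k) (K : ℕ) :
    ∑ k ∈ range K, u k ≤ exp (∑' k, a k) * (δ 0 + ∑' k, b k) := by
  calc ∑ k ∈ range K, u k ≤ ∑ k ∈ range K, u k + δ K := le_add_of_nonneg_right (hδ K)
    _ ≤ exp (∑ k ∈ range K, a k) * (δ 0 + ∑ k ∈ range K, b k) :=
      sum_add_le_exp_sum_mul hu (hδ 0) ha hb h K
    _ ≤ exp (∑' k, a k) * (δ 0 + ∑' k, b k) := by
      gcongr
      · exact add_nonneg (hδ 0) (sum_nonneg fun k _ => hb k)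
      · exact ha_sum.sum_le_tsum _ fun k _ => ha k
      · exact hb_sum.sum_le_tsum _ fun k _ => hb k

theorem natCast_mul_mul_iInf_le_sum {α r : ℕ → ℝ} (hα : Antitone α) (hα_nonneg : ∀ k, 0 ≤ α k)
    (hr : ∀ k, 0 ≤ r k) (K : ℕ) :
    K * α (K - 1) * ⨅ k : Fin K, r k ≤ ∑ k ∈ range K, α k * r k := by
  have hinf_nonneg : 0 ≤ ⨅ k : Fin K, r k := Real.iInf_nonneg fun k => hr k
  have hterm : ∀ k ∈ range K, α (K - 1) * ⨅ k : Fin K, r k ≤ α k * r k := by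
    intro k hk
    rw [mem_range] at hk
    exact mul_le_mul (hα (Nat.le_sub_one_of_lt hk))
      (ciInf_le (f := fun i : Fin K => r i) ⟨0, Set.forall_mem_range.2 fun i => hr i⟩ ⟨k, hk⟩)
      hinf_nonneg (hα_nonneg k)
  calc (K : ℝ) * α (K - 1) * ⨅ k : Fin K, r k
        = ∑ _k ∈ range K, α (K - 1) * ⨅ k : Fin K, r k := by
        rw [sum_const, card_range, nsmul_eq_mul, mul_assoc]
    _ ≤ ∑ k ∈ range K, α k * r k := sum_le_sum hterm

theorem tendsto_iInf_of_sum_mul_le {α r : ℕ → ℝ} {B : ℝ} (hα : Antitone α) (hα_pos : ∀ k, 0 < α k)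
    (hr : ∀ k, 0 ≤ r k) (hsum : ∀ K, ∑ k ∈ range K, α k * r k ≤ B)
    (hlim : Tendsto (fun K : ℕ => 1 / ((K : ℝ) * α (K - 1))) atTop (nhds 0)) :
    Tendsto (fun K : ℕ => ⨅ k : Fin K, r k) atTop (nhds 0) := by
  have hbound : ∀ᶠ K : ℕ in atTop, (⨅ k : Fin K, r k) ≤ B * (1 / ((K : ℝ) * α (K - 1))) := by
    filter_upwards [eventually_ge_atTop 1] with K hK
    have hKα : 0 < (K : ℝ) * α (K - 1) := mul_pos (by exact_mod_cast hK) (hα_pos _)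
    rw [mul_one_div, le_div_iff₀ hKα, mul_comm]
    exact (natCast_mul_mul_iInf_le_sum hα (fun k => (hα_pos k).le) hr K).trans (hsum K)
  refine squeeze_zero' (Eventually.of_forall fun K => Real.iInf_nonneg fun k => hr k) hbound ?_
  simpa using hlim.const_mul B

/-- deterministic core of the convergence analysis; the running minimum
`min_{0 ≤ k ≤ K-1} r_k` tends to `0` as `K → ∞`. -/
theorem brsgd_deterministic_convergence_min
    (r δ : ℕ → ℝ) (L A' C' : ℝ)
    (hr : ∀ k, 0 ≤ r k) (hδ : ∀ k, 0 ≤ δ k)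
    (hL : 0 < L) (hA' : 0 < A') (hC' : 0 < C')
    (α : ℕ → ℝ) (hα_pos : ∀ k, 0 < α k) (hα_mono : ∀ k, α (k + 1) ≤ α k)
    (hα_sq : Summable fun k => (α k) ^ 2)
    (hα_lim : Filter.Tendsto (fun K : ℕ => 1 / ((K : ℝ) * α (K - 1)))
      Filter.atTop (nhds 0))
    (hineq : ∀ k, α k / 2 * r k ≤
      (1 + L * A' * (α k) ^ 2) * δ k - δ (k + 1) + L * C' * (α k) ^ 2 / 2) :
    Filter.Tendsto (fun K : ℕ => ⨅ k : Fin K, r k) Filter.atTop (nhds 0) := by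
  set B := exp (∑' k, L * A' * α k ^ 2) * (δ 0 + ∑' k, L * C' * α k ^ 2 / 2)
  have hhalf : ∀ K, ∑ k ∈ range K, α k / 2 * r k ≤ B :=
    sum_range_le_exp_tsum_mul
      (fun k => mul_nonneg (div_nonneg (hα_pos k).le zero_le_two) (hr k)) hδ
      (fun k => by positivity) (fun k => by positivity)
      (hα_sq.mul_left _) ((hα_sq.mul_left _).div_const _) (fun k => by linarith [hineq k])
  refine tendsto_iInf_of_sum_mul_le (B := 2 * B) (antitone_nat_of_succ_le hα_mono) hα_pos hr
    (fun K => ?_) hα_lim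
  calc ∑ k ∈ range K, α k * r k = 2 * ∑ k ∈ range K, α k / 2 * r k := by
        rw [mul_sum]; congr 1; ext k; ring
    _ ≤ 2 * B := by linarith [hhalf K]
end

section
/- Let (r_k)_{k≥0} and (δ_k)_{k≥0} be nonnegative real sequences, let L, A', C' > 0, and let (α_k)_{k≥0} be a positive non-increasing real sequence with ∑_{k=0}^∞ α_k² < ∞ and lim_{K→∞} 1/(K·α_{K-1}) = 0. Suppose that for all k ≥ 0 one has (α_k/2)·r_k ≤ (1 + L·A'·α_k²)·δ_k − δ_{k+1} + (L·C'·α_k²)/2. Define W_{-1} = 1 and W_k = W_{k-1}·α_k/(α_{k-1}·(1 + L·A'·α_k²)) for k ≥ 0 (with the convention α_{-1} := α_0). Then lim_{K→∞} (∑_{k=0}^{K-1} r_k·W_k)/(∑_{k=0}^{K-1} W_k) = 0. -/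
/-!
With `P_k = ∏_{j<k} (1 + L A' α_j²)` one has `W_k = α_k / (α₀ P_{k+1})`, and dividing the descent
inequality by `P_{k+1} / 2` makes it telescope in the Lyapunov sequence `δ_k / P_k`. Since
`1 ≤ P_k ≤ exp (L A' ∑ α_j²)`, the series `∑ r_k α_k / P_{k+1}` converges, while
`∑_{k<K} α_k / P_{k+1} ≥ K α_{K-1} / exp (L A' ∑ α_j²)` tends to infinity.
-/

open Filter Finset Topology

lemma tendsto_atTop_of_one_div_tendsto_zero {ι : Type*} {l : Filter ι} {f : ι → ℝ}
    (hf : ∀ᶠ i in l, 0 < f i) (h : Tendsto (fun i => 1 / f i) l (𝓝 0)) :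
    Tendsto f l atTop := by
  have h' : Tendsto (fun i => 1 / f i) l (𝓝[>] 0) :=
    tendsto_nhdsWithin_iff.2 ⟨h, hf.mono fun _ hi => one_div_pos.2 hi⟩
  exact h'.inv_tendsto_nhdsGT_zero.congr fun i => by simp

section

variable (c : ℝ) (α : ℕ → ℝ)

def growthFactor (k : ℕ) : ℝ := ∏ j ∈ range k, (1 + c * α j ^ 2)

noncomputable def dampedStep (k : ℕ) : ℝ := α k / growthFactor c α (k + 1)

variable {c α}

@[simp] lemma growthFactor_zero : growthFactor c α 0 = 1 := prod_range_zero _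

lemma growthFactor_succ (k : ℕ) :
    growthFactor c α (k + 1) = growthFactor c α k * (1 + c * α k ^ 2) :=
  prod_range_succ _ _

lemma one_le_growthFactor (hc : 0 ≤ c) (k : ℕ) : 1 ≤ growthFactor c α k :=
  one_le_prod fun _ _ => le_add_of_nonneg_right (by positivity)

lemma growthFactor_pos (hc : 0 ≤ c) (k : ℕ) : 0 < growthFactor c α k :=
  zero_lt_one.trans_le (one_le_growthFactor hc k)

lemma growthFactor_le_exp_tsum (hc : 0 ≤ c) (hα : Summable fun k => α k ^ 2) (k : ℕ) :
    growthFactor c α k ≤ Real.exp (c * ∑' j, α j ^ 2) :=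
  calc growthFactor c α k ≤ Real.exp (∑ j ∈ range k, c * α j ^ 2) :=
        Real.prod_one_add_le_exp_sum _ fun _ => by positivity
    _ ≤ Real.exp (c * ∑' j, α j ^ 2) := by
        rw [← mul_sum]
        gcongr
        exact hα.sum_le_tsum _ fun _ _ => sq_nonneg _

lemma dampedStep_pos (hc : 0 ≤ c) {k : ℕ} (hα : 0 < α k) : 0 < dampedStep c α k :=
  div_pos hα (growthFactor_pos hc _)

lemma eq_dampedStep_div_of_recursion (hc : 0 ≤ c) (hα : ∀ k, 0 < α k) {W : ℕ → ℝ}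
    (hW0 : W 0 = 1 * (α 0 / (α 0 * (1 + c * α 0 ^ 2))))
    (hW : ∀ k, W (k + 1) = W k * (α (k + 1) / (α k * (1 + c * α (k + 1) ^ 2)))) (k : ℕ) :
    W k = dampedStep c α k / α 0 := by
  have hα0 := (hα 0).ne'
  induction k with
  | zero => rw [hW0, dampedStep, growthFactor_succ, growthFactor_zero]; field_simp
  | succ k ih =>
    rw [hW, ih, dampedStep, dampedStep, growthFactor_succ (k + 1)]
    have := growthFactor_pos (α := α) hc (k + 1)
    have := (hα k).ne'
    field_simp

lemma dampedStep_mul_le (hc : 0 ≤ c) {r δ : ℕ → ℝ} {D : ℝ} (hD : 0 ≤ D) {k : ℕ}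
    (h : α k / 2 * r k ≤ (1 + c * α k ^ 2) * δ k - δ (k + 1) + D * α k ^ 2 / 2) :
    dampedStep c α k * r k ≤
      2 * (δ k / growthFactor c α k - δ (k + 1) / growthFactor c α (k + 1)) + D * α k ^ 2 := by
  have hP := growthFactor_pos (α := α) hc k
  have hP' := one_le_growthFactor (α := α) hc (k + 1)
  have hdiv : dampedStep c α k * r k ≤
      (2 * ((1 + c * α k ^ 2) * δ k - δ (k + 1)) + D * α k ^ 2) / growthFactor c α (k + 1) := by
    rw [dampedStep, div_mul_eq_mul_div]
    gcongr
    linarith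
  have htelescope : 2 * ((1 + c * α k ^ 2) * δ k - δ (k + 1)) / growthFactor c α (k + 1) =
      2 * (δ k / growthFactor c α k - δ (k + 1) / growthFactor c α (k + 1)) := by
    rw [growthFactor_succ]
    have : 0 < 1 + c * α k ^ 2 := by positivity
    field_simp
  have hnoise : D * α k ^ 2 / growthFactor c α (k + 1) ≤ D * α k ^ 2 :=
    div_le_self (by positivity) hP'
  rw [add_div, htelescope] at hdiv
  linarith

variable {r δ : ℕ → ℝ} {D : ℝ}

lemma sum_dampedStep_mul_le (hc : 0 ≤ c) (hα : Summable fun k => α k ^ 2) (hD : 0 ≤ D)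
    (hδ : ∀ k, 0 ≤ δ k)
    (hineq : ∀ k, α k / 2 * r k ≤ (1 + c * α k ^ 2) * δ k - δ (k + 1) + D * α k ^ 2 / 2)
    (K : ℕ) :
    ∑ k ∈ range K, dampedStep c α k * r k ≤ 2 * δ 0 + D * ∑' k, α k ^ 2 := by
  have hδK := div_nonneg (hδ K) (growthFactor_pos (α := α) hc K).le
  have hS := mul_le_mul_of_nonneg_left (hα.sum_le_tsum (range K) fun _ _ => sq_nonneg _) hD
  calc ∑ k ∈ range K, dampedStep c α k * r k
      ≤ ∑ k ∈ range K, (2 * (δ k / growthFactor c α k - δ (k + 1) / growthFactor c α (k + 1)) +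
          D * α k ^ 2) := sum_le_sum fun k _ => dampedStep_mul_le hc hD (hineq k)
    _ = 2 * (δ 0 - δ K / growthFactor c α K) + D * ∑ k ∈ range K, α k ^ 2 := by
        rw [sum_add_distrib, ← mul_sum, ← mul_sum, sum_range_sub', growthFactor_zero, div_one]
    _ ≤ 2 * δ 0 + D * ∑' k, α k ^ 2 := by linarith

lemma summable_dampedStep_mul (hc : 0 ≤ c) (hα_pos : ∀ k, 0 < α k)
    (hα : Summable fun k => α k ^ 2) (hD : 0 ≤ D) (hr : ∀ k, 0 ≤ r k) (hδ : ∀ k, 0 ≤ δ k)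
    (hineq : ∀ k, α k / 2 * r k ≤ (1 + c * α k ^ 2) * δ k - δ (k + 1) + D * α k ^ 2 / 2) :
    Summable fun k => dampedStep c α k * r k :=
  summable_of_sum_range_le (fun k => mul_nonneg (dampedStep_pos hc (hα_pos k)).le (hr k))
    (sum_dampedStep_mul_le hc hα hD hδ hineq)

lemma card_mul_div_le_sum_dampedStep (hc : 0 ≤ c) (hα_pos : ∀ k, 0 < α k)
    (hα_anti : Antitone α) (hα : Summable fun k => α k ^ 2) (K : ℕ) :
    K * α (K - 1) / Real.exp (c * ∑' j, α j ^ 2) ≤ ∑ k ∈ range K, dampedStep c α k := by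
  have := card_nsmul_le_sum (range K) (dampedStep c α) (α (K - 1) / Real.exp (c * ∑' j, α j ^ 2))
    fun k hk => by
      rw [dampedStep]
      exact div_le_div₀ (hα_pos k).le (hα_anti (Nat.le_pred_of_lt (mem_range.1 hk)))
        (growthFactor_pos hc _) (growthFactor_le_exp_tsum hc hα _)
  simpa [mul_div_assoc] using this

lemma tendsto_sum_dampedStep_atTop (hc : 0 ≤ c) (hα_pos : ∀ k, 0 < α k)
    (hα_anti : Antitone α) (hα : Summable fun k => α k ^ 2)
    (hα_lim : Tendsto (fun K : ℕ => 1 / ((K : ℝ) * α (K - 1))) atTop (𝓝 0)) :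
    Tendsto (fun K => ∑ k ∈ range K, dampedStep c α k) atTop atTop := by
  have hpos : ∀ᶠ K : ℕ in atTop, 0 < (K : ℝ) * α (K - 1) :=
    eventually_ge_atTop 1 |>.mono fun K hK => mul_pos (by exact_mod_cast hK) (hα_pos _)
  exact tendsto_atTop_mono (card_mul_div_le_sum_dampedStep hc hα_pos hα_anti hα)
    ((tendsto_atTop_of_one_div_tendsto_zero hpos hα_lim).atTop_div_const (Real.exp_pos _))

end

/-- deterministic core of the random-iterate convergence analysis:
the weighted averages `(∑_{k<K} r_k W_k) / (∑_{k<K} W_k)` tend to `0`.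
With the convention `α_{-1} := α_0` and `W_{-1} = 1`, the weighting sequence
satisfies `W 0 = α 0 / (α 0 * (1 + L * A' * (α 0)^2))`. -/
theorem brsgd_deterministic_convergence_avg
    (r δ : ℕ → ℝ) (L A' C' : ℝ)
    (hr : ∀ k, 0 ≤ r k) (hδ : ∀ k, 0 ≤ δ k)
    (hL : 0 < L) (hA' : 0 < A') (hC' : 0 < C')
    (α : ℕ → ℝ) (hα_pos : ∀ k, 0 < α k) (hα_mono : ∀ k, α (k + 1) ≤ α k)
    (hα_sq : Summable fun k => (α k) ^ 2)
    (hα_lim : Filter.Tendsto (fun K : ℕ => 1 / ((K : ℝ) * α (K - 1)))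
      Filter.atTop (nhds 0))
    (hineq : ∀ k, α k / 2 * r k ≤
      (1 + L * A' * (α k) ^ 2) * δ k - δ (k + 1) + L * C' * (α k) ^ 2 / 2)
    (W : ℕ → ℝ)
    (hW0 : W 0 = 1 * (α 0 / (α 0 * (1 + L * A' * (α 0) ^ 2))))
    (hW : ∀ k, W (k + 1) = W k * (α (k + 1) / (α k * (1 + L * A' * (α (k + 1)) ^ 2)))) :
    Filter.Tendsto
      (fun K : ℕ => (∑ k ∈ Finset.range K, r k * W k) / (∑ k ∈ Finset.range K, W k))
      Filter.atTop (nhds 0) := by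
  have hc : 0 ≤ L * A' := by positivity
  have hD : 0 ≤ L * C' := by positivity
  have hnum := (summable_dampedStep_mul hc hα_pos hα_sq hD hr hδ hineq).hasSum.tendsto_sum_nat
  have hden := tendsto_sum_dampedStep_atTop hc hα_pos (antitone_nat_of_succ_le hα_mono)
    hα_sq hα_lim
  refine (hnum.div_atTop hden).congr fun K => ?_
  simp_rw [eq_dampedStep_div_of_recursion hc hα_pos hW0 hW, mul_div_assoc', ← sum_div,
    mul_comm (r _)]
  exact (div_div_div_cancel_right₀ (hα_pos 0).ne' _ _).symm
end

section
/- Let (r_k)_{k≥0} and (δ_k)_{k≥0} be nonnegative real sequences, let L, A', C' > 0, and let (α_k)_{k≥0} be a positive non-increasing real sequence. Suppose that for all k ≥ 0 one has (α_k/2)·r_k ≤ (1 + L·A'·α_k²)·δ_k − δ_{k+1} + (L·C'·α_k²)/2. Then for every K ≥ 1, setting Q_K := ∑_{k=0}^{K-1} α_k², one has min_{0 ≤ k ≤ K-1} r_k ≤ exp(L·A'·Q_K)·(2·δ_0 + L·C'·Q_K)/(K·α_{K-1}). -/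
/-!
Writing the hypothesis as `δ (k+1) + a k ≤ (1 + c k) δ k + b k`, the sequence
`δ n + ∑_{k<n} a k` satisfies the recursion of the discrete Grönwall inequality, so
`∑_{k<K} (α k / 2) r k ≤ exp (L A' Q_K) (δ 0 + L C' Q_K / 2)`. Each summand is at least
`(α (K-1) / 2) min_{k<K} r k` because `α` is non-increasing.
-/

open Finset Real

theorem discrete_gronwall_sum_add {a b c δ : ℕ → ℝ} (ha : ∀ k, 0 ≤ a k) (hb : ∀ k, 0 ≤ b k)
    (hc : ∀ k, 0 ≤ c k) (hδ₀ : 0 ≤ δ 0)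
    (h : ∀ k, a k ≤ (1 + c k) * δ k - δ (k + 1) + b k) (K : ℕ) :
    δ K + ∑ k ∈ range K, a k ≤ (δ 0 + ∑ k ∈ range K, b k) * exp (∑ k ∈ range K, c k) := by
  let u : ℕ → ℝ := fun n ↦ δ n + ∑ k ∈ range n, a k
  have hrec : ∀ n ≥ 0, u (n + 1) ≤ (1 + c n) * u n + b n := by
    intro n _
    have : 0 ≤ c n * ∑ k ∈ range n, a k := mul_nonneg (hc n) (sum_nonneg fun k _ ↦ ha k)
    simp only [u, sum_range_succ]
    linarith [h n]
  have hu₀ : 0 ≤ u 0 := by simpa [u] using hδ₀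
  simpa only [u, ← range_eq_Ico, sum_range_zero, add_zero] using
    discrete_gronwall hu₀ hrec (fun n _ ↦ hc n) (fun n _ ↦ hb n) (Nat.zero_le K)

theorem natCast_mul_mul_iInf_le_sum_mul {α r : ℕ → ℝ} (hα : Antitone α) (hα₀ : ∀ k, 0 ≤ α k)
    (hr : ∀ k, 0 ≤ r k) (K : ℕ) :
    K * (α (K - 1) * ⨅ k : Fin K, r k) ≤ ∑ k ∈ range K, α k * r k := by
  have hterm : ∀ k ∈ range K, α (K - 1) * ⨅ i : Fin K, r i ≤ α k * r k := by
    intro k hk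
    have hkK := mem_range.mp hk
    refine mul_le_mul (hα (by omega)) ?_ (Real.iInf_nonneg fun i ↦ hr i) (hα₀ k)
    exact ciInf_le (Set.finite_range _).bddBelow (⟨k, hkK⟩ : Fin K)
  simpa using sum_le_sum hterm

/-- deterministic core of the explicit convergence-rate bound,
with `Q_K = ∑_{k=0}^{K-1} α_k²`. -/
theorem brsgd_deterministic_rate_min
    (r δ : ℕ → ℝ) (L A' C' : ℝ)
    (hr : ∀ k, 0 ≤ r k) (hδ : ∀ k, 0 ≤ δ k)
    (hL : 0 < L) (hA' : 0 < A') (hC' : 0 < C')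
    (α : ℕ → ℝ) (hα_pos : ∀ k, 0 < α k) (hα_mono : ∀ k, α (k + 1) ≤ α k)
    (hineq : ∀ k, α k / 2 * r k ≤
      (1 + L * A' * (α k) ^ 2) * δ k - δ (k + 1) + L * C' * (α k) ^ 2 / 2)
    (K : ℕ) (hK : 1 ≤ K) :
    (⨅ k : Fin K, r k) ≤
      Real.exp (L * A' * ∑ k ∈ Finset.range K, (α k) ^ 2) *
          (2 * δ 0 + L * C' * ∑ k ∈ Finset.range K, (α k) ^ 2) /
        ((K : ℝ) * α (K - 1)) := by
  have hα_half : Antitone fun k ↦ α k / 2 := fun i j hij ↦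
    div_le_div_of_nonneg_right (antitone_nat_of_succ_le hα_mono hij) zero_le_two
  have hupper := discrete_gronwall_sum_add
    (fun k ↦ mul_nonneg (div_nonneg (hα_pos k).le zero_le_two) (hr k))
    (fun k ↦ by positivity) (fun k ↦ by positivity) (hδ 0) hineq K
  have hlower := natCast_mul_mul_iInf_le_sum_mul hα_half
    (fun k ↦ div_nonneg (hα_pos k).le zero_le_two) hr K
  simp only [← mul_sum, ← sum_div] at hupper
  have hK₀ : (0 : ℝ) < K := by exact_mod_cast hK
  rw [le_div_iff₀ (mul_pos hK₀ (hα_pos (K - 1)))]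
  linarith [hδ K]
end

section
/- Let (Ω, F, P) be a probability space with a filtration (F_k)_{k≥0}. Let d ≥ 1, let F : ℝ^d → ℝ be differentiable with L-Lipschitz gradient (L > 0) and bounded below by F_low. Fix α ∈ [0, π/2), nonnegative constants E', A, B, C with B·E' > 0, and p ∈ (1/2, 1), and set α_k := (1 − sin α)/(L·B·E'·(k+1)^p) for all k ≥ 0. Let (w_k)_{k≥0}, (A_k)_{k≥0}, (G_k)_{k≥0} be sequences of ℝ^d-valued random vectors with w_k F_k-measurable, ‖A_k‖² and ‖G_k‖² integrable, and w_{k+1} = w_k − α_k·A_k. Suppose for every k ≥ 0, almost surely: (i) ⟨E[A_k | F_k], ∇F(w_k)⟩ ≥ (1 − sin α)·‖∇F(w_k)‖²; (ii) E[‖A_k‖² | F_k] ≤ E'·E[‖G_k‖² | F_k]; (iii) E[G_k | F_k] = ∇F(w_k); (iv) E[‖G_k‖² | F_k] ≤ 2·A·(F(w_k) − F_low) + B·‖∇F(w_k)‖² + C. Define A' := A·E', C' := C·E', δ_0 := F(w_0) − F_low (assuming w_0 is deterministic) and Q_K := ∑_{k=0}^{K-1} α_k². Then for every K ≥ 1,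 min_{0 ≤ k ≤ K-1} E[‖∇F(w_k)‖] ≤ ( exp(L·A'·Q_K)·(2·δ_0 + L·C'·Q_K) / ((1 − sin α)·K·α_{K-1}) )^{1/2}. -/
/-!
Write `D_k = E[F(w_k)] - F_low` and `g_k = ∇F(w_k)`. The descent lemma for the `L`-smooth `F`,
together with the pull-out property and the tower property of conditional expectation, turns
the hypotheses on `A_k` and `G_k` into
`D_{k+1} + (1 - sin α)/2 · α_k E‖g_k‖² ≤ (1 + L A' α_k²) D_k + L C'/2 · α_k²`;
the choice of step size gives `L B E' α_k ≤ 1 - sin α`, which absorbs the `B`-part of the second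
moment into half of the descent term. Unrolling this recursion with `1 + x ≤ exp x` bounds
`∑_{k<K} α_k E‖g_k‖²`; as the `α_k` decrease, some `k < K` has `K α_{K-1} E‖g_k‖²` below that
bound, and Jensen's inequality `(E‖g_k‖)² ≤ E‖g_k‖²` finishes the proof.
-/

open MeasureTheory Filter Finset
open scoped RealInnerProductSpace NNReal

theorem add_sum_le_prod_mul_of_recurrence {D a b c : ℕ → ℝ} (ha : ∀ k, 0 ≤ a k)
    (hb : ∀ k, 0 ≤ b k) (hc : ∀ k, 0 ≤ c k)
    (hrec : ∀ k, D (k + 1) + b k ≤ (1 + a k) * D k + c k) (n : ℕ) :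
    D n + ∑ k ∈ range n, b k ≤ (∏ k ∈ range n, (1 + a k)) * (D 0 + ∑ k ∈ range n, c k) := by
  induction n with
  | zero => simp
  | succ n ih =>
    have hP : 1 ≤ ∏ k ∈ range (n + 1), (1 + a k) :=
      one_le_prod fun k _ => le_add_of_nonneg_right (ha k)
    have hB : 0 ≤ ∑ k ∈ range n, b k := sum_nonneg fun k _ => hb k
    rw [sum_range_succ, sum_range_succ, prod_range_succ] at *
    nlinarith [hrec n, mul_le_mul_of_nonneg_left ih (by linarith [ha n] : 0 ≤ 1 + a n),
      mul_nonneg (ha n) hB, mul_le_mul_of_nonneg_right hP (hc n)]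

theorem sum_le_exp_sum_mul_of_recurrence {D a b c : ℕ → ℝ} (hD : ∀ k, 0 ≤ D k)
    (ha : ∀ k, 0 ≤ a k) (hb : ∀ k, 0 ≤ b k) (hc : ∀ k, 0 ≤ c k)
    (hrec : ∀ k, D (k + 1) + b k ≤ (1 + a k) * D k + c k) (n : ℕ) :
    ∑ k ∈ range n, b k ≤ Real.exp (∑ k ∈ range n, a k) * (D 0 + ∑ k ∈ range n, c k) := by
  have hC : 0 ≤ D 0 + ∑ k ∈ range n, c k := add_nonneg (hD 0) (sum_nonneg fun k _ => hc k)
  calc ∑ k ∈ range n, b k ≤ D n + ∑ k ∈ range n, b k := le_add_of_nonneg_left (hD n)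
    _ ≤ (∏ k ∈ range n, (1 + a k)) * (D 0 + ∑ k ∈ range n, c k) :=
      add_sum_le_prod_mul_of_recurrence ha hb hc hrec n
    _ ≤ _ := mul_le_mul_of_nonneg_right (Real.prod_one_add_le_exp_sum _ ha) hC

theorem exists_lt_mul_le_sum_mul {η b : ℕ → ℝ} (hη : Antitone η) (hη0 : ∀ k, 0 ≤ η k)
    (hb : ∀ k, 0 ≤ b k) {K : ℕ} (hK : 0 < K) :
    ∃ k < K, K * η (K - 1) * b k ≤ ∑ i ∈ range K, η i * b i := by
  obtain ⟨k, hk, hmin⟩ := exists_min_image (range K) b (nonempty_range_iff.2 hK.ne')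
  refine ⟨k, mem_range.1 hk, ?_⟩
  calc K * η (K - 1) * b k = ∑ _i ∈ range K, η (K - 1) * b k := by simp [mul_assoc]
    _ ≤ ∑ i ∈ range K, η i * b i := sum_le_sum fun i hi =>
      mul_le_mul (hη (Nat.le_sub_one_of_lt (mem_range.1 hi))) (hmin i hi) (hb k) (hη0 i)

theorem antitone_div_mul_add_one_rpow {c M p : ℝ} (hc : 0 ≤ c) (hM : 0 < M) (hp : 0 ≤ p) :
    Antitone fun k : ℕ => c / (M * ((k : ℝ) + 1) ^ p) := fun j k hjk => by
  dsimp only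
  gcongr

theorem mul_div_mul_add_one_rpow_le {c M p : ℝ} (hc : 0 ≤ c) (hM : 0 < M) (hp : 0 ≤ p)
    (k : ℕ) : M * (c / (M * ((k : ℝ) + 1) ^ p)) ≤ c := by
  rw [← mul_div_assoc, mul_div_mul_left _ _ hM.ne']
  exact div_le_self hc (Real.one_le_rpow (by linarith [k.cast_nonneg (α := ℝ)]) hp)

theorem Real.sin_lt_one_of_neg_pi_div_two_le_of_lt {x : ℝ} (h0 : -(Real.pi / 2) ≤ x)
    (h1 : x < Real.pi / 2) : Real.sin x < 1 := by
  simpa using Real.sin_lt_sin_of_lt_of_le_pi_div_two h0 le_rfl h1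

section LipschitzGradient

variable {E : Type*} [NormedAddCommGroup E] [InnerProductSpace ℝ E] [CompleteSpace E]
  {F : E → ℝ} {K : ℝ≥0}

theorem hasDerivAt_comp_add_smul (hF : Differentiable ℝ F) (x v : E) (t : ℝ) :
    HasDerivAt (fun t : ℝ => F (x + t • v)) ⟪gradient F (x + t • v), v⟫ t := by
  have hline : HasDerivAt (fun t : ℝ => x + t • v) v t := by
    simpa using ((hasDerivAt_id t).smul_const v).const_add x
  have := (hF _).hasGradientAt.hasFDerivAt.comp_hasDerivAt t hline
  simp only [InnerProductSpace.toDual_apply_apply] at this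
  exact this

theorem le_add_inner_gradient_add_of_lipschitzWith (hF : Differentiable ℝ F)
    (hlip : LipschitzWith K (gradient F)) (x y : E) :
    F y ≤ F x + ⟪gradient F x, y - x⟫ + K / 2 * ‖y - x‖ ^ 2 := by
  set v := y - x
  let φ : ℝ → ℝ := fun t => F (x + t • v) - t * ⟪gradient F x, v⟫ - K / 2 * t ^ 2 * ‖v‖ ^ 2
  have hφ : ∀ t, HasDerivAt φ
      (⟪gradient F (x + t • v) - gradient F x, v⟫ - K * t * ‖v‖ ^ 2) t := by
    intro t
    refine (((hasDerivAt_comp_add_smul hF x v t).sub ((hasDerivAt_id t).mul_const _)).sub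
      (((hasDerivAt_pow 2 t).const_mul ((K : ℝ) / 2)).mul_const (‖v‖ ^ 2))).congr_deriv ?_
    rw [inner_sub_left]
    simp only [Nat.cast_ofNat]
    ring
  have hφ' : ∀ t ∈ interior (Set.Ici (0 : ℝ)),
      ⟪gradient F (x + t • v) - gradient F x, v⟫ - K * t * ‖v‖ ^ 2 ≤ 0 := by
    intro t ht
    rw [interior_Ici, Set.mem_Ioi] at ht
    have hgrad : ‖gradient F (x + t • v) - gradient F x‖ ≤ K * (t * ‖v‖) := by
      simpa [norm_smul, abs_of_pos ht] using hlip.norm_sub_le (x + t • v) x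
    nlinarith [real_inner_le_norm (gradient F (x + t • v) - gradient F x) v, norm_nonneg v]
  have hanti : AntitoneOn φ (Set.Ici 0) :=
    antitoneOn_of_hasDerivWithinAt_nonpos (convex_Ici 0)
      (fun t _ => (hφ t).continuousAt.continuousWithinAt)
      (fun t _ => (hφ t).hasDerivWithinAt) hφ'
  have h10 : φ 1 ≤ φ 0 := hanti Set.self_mem_Ici (Set.mem_Ici.2 zero_le_one) zero_le_one
  simp only [φ, v, one_smul, zero_smul, add_zero, add_sub_cancel] at h10
  linarith

end LipschitzGradient

section SquareIntegrable

variable {Ω E : Type*} {mΩ : MeasurableSpace Ω} {μ : Measure Ω}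

theorem LipschitzWith.memLp_comp [NormedAddCommGroup E] {G : Type*} [NormedAddCommGroup G]
    [IsFiniteMeasure μ] {f : E → G} {K : ℝ≥0} (hf : LipschitzWith K f) {p : ENNReal}
    {X : Ω → E} (hX : MemLp X p μ) : MemLp (fun ω => f (X ω)) p μ := by
  have h0 : LipschitzWith (K + 0) (fun x => f x - f 0) := hf.sub (LipschitzWith.const (f 0))
  convert (h0.comp_memLp (by simp) hX).add (memLp_const (f 0)) using 1
  ext ω
  simp

theorem memLp_of_succ_eq_sub_smul [NormedAddCommGroup E] [NormedSpace ℝ E] {p : ENNReal}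
    {w a : ℕ → Ω → E} {η : ℕ → ℝ} (h0 : MemLp (w 0) p μ) (ha : ∀ k, MemLp (a k) p μ)
    (hw : ∀ k ω, w (k + 1) ω = w k ω - η k • a k ω) (k : ℕ) : MemLp (w k) p μ := by
  induction k with
  | zero => exact h0
  | succ k ih =>
    rw [show w (k + 1) = fun ω => w k ω - η k • a k ω from funext (hw k)]
    exact ih.sub ((ha k).const_smul (η k))

theorem aestronglyMeasurable_of_eq_sub_smul [NormedAddCommGroup E] [NormedSpace ℝ E]
    {x y a : Ω → E} {η : ℝ} (hη : η ≠ 0) (hx : AEStronglyMeasurable x μ)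
    (hy : AEStronglyMeasurable y μ) (h : ∀ ω, y ω = x ω - η • a ω) :
    AEStronglyMeasurable a μ := by
  rw [show a = fun ω => η⁻¹ • (x ω - y ω) from funext fun ω => by
    rw [h, sub_sub_cancel, smul_smul, inv_mul_cancel₀ hη, one_smul]]
  exact (hx.sub hy).const_smul _

theorem MeasureTheory.MemLp.integrable_inner [NormedAddCommGroup E] [InnerProductSpace ℝ E]
    {X Y : Ω → E} (hX : MemLp X 2 μ) (hY : MemLp Y 2 μ) : Integrable (fun ω => ⟪X ω, Y ω⟫) μ :=
  memLp_one_iff_integrable.1 ((innerSL ℝ (E := E)).memLp_of_bilin 1 hX hY)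

theorem sq_integral_le_integral_sq [IsProbabilityMeasure μ] {f : Ω → ℝ} (hf : MemLp f 2 μ) :
    (∫ ω, f ω ∂μ) ^ 2 ≤ ∫ ω, f ω ^ 2 ∂μ := by
  have := ProbabilityTheory.variance_nonneg f μ
  rw [ProbabilityTheory.variance_eq_sub hf] at this
  simpa using this

theorem iInf_integral_norm_le_rpow [NormedAddCommGroup E] [IsProbabilityMeasure μ]
    {g : ℕ → Ω → E} (hg : ∀ k, MemLp (g k) 2 μ) {η : ℕ → ℝ} (hη : Antitone η) (hη0 : ∀ k, 0 < η k)
    {K : ℕ} (hK : 0 < K) {S : ℝ}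
    (hS : ∑ k ∈ range K, η k * ∫ ω, ‖g k ω‖ ^ 2 ∂μ ≤ S) :
    ⨅ k : Fin K, ∫ ω, ‖g k ω‖ ∂μ ≤ (S / (K * η (K - 1))) ^ ((1 : ℝ) / 2) := by
  obtain ⟨k, hk, hkS⟩ := exists_lt_mul_le_sum_mul hη (fun k => (hη0 k).le)
    (fun k => integral_nonneg fun ω => by positivity : ∀ k, 0 ≤ ∫ ω, ‖g k ω‖ ^ 2 ∂μ) hK
  have hKη : (0 : ℝ) < K * η (K - 1) := mul_pos (by exact_mod_cast hK) (hη0 _)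
  have hmin : ∫ ω, ‖g k ω‖ ^ 2 ∂μ ≤ S / (K * η (K - 1)) := by
    rw [le_div_iff₀ hKη]
    linarith
  have hJensen := sq_integral_le_integral_sq (hg k).norm
  calc ⨅ k : Fin K, ∫ ω, ‖g k ω‖ ∂μ ≤ ∫ ω, ‖g k ω‖ ∂μ :=
        ciInf_le ⟨0, by rintro _ ⟨i, rfl⟩; exact integral_nonneg fun ω => norm_nonneg _⟩
          (⟨k, hk⟩ : Fin K)
    _ ≤ (S / (K * η (K - 1))) ^ ((1 : ℝ) / 2) := by
        rw [← Real.sqrt_eq_rpow]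
        exact Real.le_sqrt_of_sq_le (hJensen.trans hmin)

theorem iInf_integral_norm_le_of_recurrence [NormedAddCommGroup E] [IsProbabilityMeasure μ]
    {g : ℕ → Ω → E} (hg : ∀ k, MemLp (g k) 2 μ) {D η : ℕ → ℝ} {ρ a c : ℝ} (hρ : 0 < ρ)
    (ha : 0 ≤ a) (hc : 0 ≤ c) (hD : ∀ k, 0 ≤ D k) (hη : Antitone η) (hη0 : ∀ k, 0 < η k)
    (hrec : ∀ k, D (k + 1) + ρ / 2 * (η k * ∫ ω, ‖g k ω‖ ^ 2 ∂μ) ≤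
      (1 + a * η k ^ 2) * D k + c / 2 * η k ^ 2) {K : ℕ} (hK : 0 < K) :
    ⨅ k : Fin K, ∫ ω, ‖g k ω‖ ∂μ ≤
      (Real.exp (a * ∑ k ∈ range K, η k ^ 2) * (2 * D 0 + c * ∑ k ∈ range K, η k ^ 2) /
        (ρ * K * η (K - 1))) ^ ((1 : ℝ) / 2) := by
  have hsum := sum_le_exp_sum_mul_of_recurrence hD (fun k => by positivity)
    (fun k => mul_nonneg (by positivity) (mul_nonneg (hη0 k).le
      (integral_nonneg fun ω => by positivity))) (fun k => by positivity) hrec K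
  simp only [← mul_sum] at hsum
  rw [mul_assoc ρ, ← div_div]
  refine iInf_integral_norm_le_rpow hg hη hη0 hK ?_
  rw [le_div_iff₀ hρ]
  linarith

variable [NormedAddCommGroup E] [InnerProductSpace ℝ E] [CompleteSpace E] {F : E → ℝ}
  {K : ℝ≥0} {c : ℝ}

theorem integrable_comp_of_lipschitzWith_gradient [IsFiniteMeasure μ] (hF : Differentiable ℝ F)
    (hlip : LipschitzWith K (gradient F)) (hlow : ∀ x, c ≤ F x) {X : Ω → E}
    (hX : MemLp X 2 μ) : Integrable (fun ω => F (X ω)) μ := by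
  have hbound : Integrable (fun ω => F 0 - c + ‖gradient F 0‖ * ‖X ω‖ + K / 2 * ‖X ω‖ ^ 2) μ :=
    ((integrable_const _).add ((hX.integrable one_le_two).norm.const_mul _)).add
      (hX.integrable_norm_pow'.const_mul _)
  have hsub : Integrable (fun ω => F (X ω) - c) μ := by
    refine hbound.mono' ((hF.continuous.comp_aestronglyMeasurable hX.1).sub
      aestronglyMeasurable_const) (ae_of_all _ fun ω => ?_)
    have hdesc := le_add_inner_gradient_add_of_lipschitzWith hF hlip 0 (X ω)
    rw [sub_zero] at hdesc
    rw [Real.norm_eq_abs, abs_of_nonneg (sub_nonneg.2 (hlow _))]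
    linarith [real_inner_le_norm (gradient F 0) (X ω)]
  refine (hsub.add (integrable_const c)).congr (ae_of_all _ fun ω => ?_)
  simp

theorem integral_comp_sub_smul_le [IsFiniteMeasure μ] (hF : Differentiable ℝ F)
    (hlip : LipschitzWith K (gradient F)) (hlow : ∀ x, c ≤ F x) {x a : Ω → E}
    (hx : MemLp x 2 μ) (ha : MemLp a 2 μ) (η : ℝ) :
    ∫ ω, F (x ω - η • a ω) ∂μ ≤ ∫ ω, F (x ω) ∂μ - η * ∫ ω, ⟪gradient F (x ω), a ω⟫ ∂μ
      + K / 2 * η ^ 2 * ∫ ω, ‖a ω‖ ^ 2 ∂μ := by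
  have hFx := integrable_comp_of_lipschitzWith_gradient hF hlip hlow hx
  have hinner := (hlip.memLp_comp hx).integrable_inner ha
  have ha2 := ha.integrable_norm_pow'
  have hdiff : Integrable (fun ω => F (x ω) - η * ⟪gradient F (x ω), a ω⟫) μ :=
    hFx.sub (hinner.const_mul η)
  calc ∫ ω, F (x ω - η • a ω) ∂μ
      ≤ ∫ ω, F (x ω) - η * ⟪gradient F (x ω), a ω⟫ + K / 2 * η ^ 2 * ‖a ω‖ ^ 2 ∂μ := by
        refine integral_mono (integrable_comp_of_lipschitzWith_gradient hF hlip hlow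
          (hx.sub (ha.const_smul η))) (hdiff.add (ha2.const_mul _))
          fun ω => ?_
        have := le_add_inner_gradient_add_of_lipschitzWith hF hlip (x ω) (x ω - η • a ω)
        simp only [sub_sub_cancel_left, inner_neg_right, inner_smul_right, norm_neg, norm_smul,
          Real.norm_eq_abs, mul_pow, sq_abs] at this
        linarith
    _ = _ := by
        rw [integral_add hdiff (ha2.const_mul _),
          integral_sub hFx (hinner.const_mul η), integral_const_mul, integral_const_mul]

end SquareIntegrable

section StochasticDescent

variable {Ω E : Type*} {m mΩ : MeasurableSpace Ω} {μ : Measure Ω}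

theorem integral_le_integral_of_le_condExp (hm : m ≤ mΩ) [SigmaFinite (μ.trim hm)]
    {f g : Ω → ℝ} (hf : Integrable f μ) (h : f ≤ᵐ[μ] μ[g|m]) :
    ∫ ω, f ω ∂μ ≤ ∫ ω, g ω ∂μ :=
  (integral_mono_ae hf integrable_condExp h).trans_eq (integral_condExp hm)

theorem integral_le_integral_of_condExp_le (hm : m ≤ mΩ) [SigmaFinite (μ.trim hm)]
    {f g : Ω → ℝ} (hf : Integrable f μ) (h : μ[g|m] ≤ᵐ[μ] f) :
    ∫ ω, g ω ∂μ ≤ ∫ ω, f ω ∂μ :=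
  (integral_condExp hm).symm.trans_le (integral_mono_ae integrable_condExp hf h)

variable [NormedAddCommGroup E] [InnerProductSpace ℝ E] [CompleteSpace E]

theorem integral_le_integral_inner_of_le_inner_condExp [IsFiniteMeasure μ] (hm : m ≤ mΩ)
    [SigmaFinite (μ.trim hm)] {f : Ω → ℝ} {X A : Ω → E} (hX : StronglyMeasurable[m] X)
    (hX2 : MemLp X 2 μ) (hA : MemLp A 2 μ) (hf : Integrable f μ)
    (h : ∀ᵐ ω ∂μ, f ω ≤ ⟪X ω, (μ[A|m]) ω⟫) :
    ∫ ω, f ω ∂μ ≤ ∫ ω, ⟪X ω, A ω⟫ ∂μ := by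
  refine integral_le_integral_of_le_condExp hm hf ?_
  filter_upwards [h, condExp_bilin_of_stronglyMeasurable_left (innerSL ℝ) hX
    (hX2.integrable_inner hA) (hA.integrable one_le_two)] with ω hle hpull
  exact hle.trans_eq hpull.symm

variable {F : E → ℝ} {K : ℝ≥0} {c : ℝ}

theorem integral_comp_sub_smul_sub_le [IsProbabilityMeasure μ] (hm : m ≤ mΩ)
    [SigmaFinite (μ.trim hm)] (hF : Differentiable ℝ F) (hlip : LipschitzWith K (gradient F))
    (hlow : ∀ x, c ≤ F x) {x a : Ω → E} (hx : StronglyMeasurable[m] x) (hx2 : MemLp x 2 μ)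
    (ha : MemLp a 2 μ) {ρ η A' B' C' : ℝ} (hη : 0 ≤ η) (hηB : K * B' * η ≤ ρ)
    (hdir : ∀ᵐ ω ∂μ, ρ * ‖gradient F (x ω)‖ ^ 2 ≤ ⟪(μ[a|m]) ω, gradient F (x ω)⟫)
    (hmom : ∀ᵐ ω ∂μ, (μ[fun ω' => ‖a ω'‖ ^ 2|m]) ω ≤
      2 * A' * (F (x ω) - c) + B' * ‖gradient F (x ω)‖ ^ 2 + C') :
    ∫ ω, F (x ω - η • a ω) ∂μ - c + ρ / 2 * (η * ∫ ω, ‖gradient F (x ω)‖ ^ 2 ∂μ) ≤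
      (1 + K * A' * η ^ 2) * (∫ ω, F (x ω) ∂μ - c) + K * C' / 2 * η ^ 2 := by
  have hg := hlip.memLp_comp hx2
  have hg2 := hg.integrable_norm_pow'
  have hFx := integrable_comp_of_lipschitzWith_gradient hF hlip hlow hx2
  have hdesc := integral_comp_sub_smul_le hF hlip hlow hx2 ha η
  have hinner : ρ * ∫ ω, ‖gradient F (x ω)‖ ^ 2 ∂μ ≤ ∫ ω, ⟪gradient F (x ω), a ω⟫ ∂μ := by
    rw [← integral_const_mul]
    refine integral_le_integral_inner_of_le_inner_condExp hm
      (hlip.continuous.comp_stronglyMeasurable hx) hg ha (hg2.const_mul ρ) ?_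
    filter_upwards [hdir] with ω h
    rwa [real_inner_comm]
  have hmom' : ∫ ω, ‖a ω‖ ^ 2 ∂μ ≤
      2 * A' * (∫ ω, F (x ω) ∂μ - c) + B' * ∫ ω, ‖gradient F (x ω)‖ ^ 2 ∂μ + C' := by
    have h1 : Integrable (fun ω => 2 * A' * (F (x ω) - c)) μ :=
      (hFx.sub (integrable_const c)).const_mul _
    have h2 : Integrable (fun ω => 2 * A' * (F (x ω) - c) + B' * ‖gradient F (x ω)‖ ^ 2) μ :=
      h1.add (hg2.const_mul _)
    have := integral_le_integral_of_condExp_le hm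
      (f := fun ω => 2 * A' * (F (x ω) - c) + B' * ‖gradient F (x ω)‖ ^ 2 + C')
      (h2.add (integrable_const C')) hmom
    rwa [integral_add h2 (integrable_const C'), integral_add h1 (hg2.const_mul _),
      integral_const_mul, integral_const_mul, integral_sub hFx (integrable_const c),
      integral_const, integral_const, probReal_univ, one_smul, one_smul] at this
  have hBq : 0 ≤ ∫ ω, ‖gradient F (x ω)‖ ^ 2 ∂μ := integral_nonneg fun ω => by positivity
  have hK : (0 : ℝ) ≤ K / 2 * η ^ 2 := by positivity
  nlinarith [mul_le_mul_of_nonneg_left hinner hη, mul_le_mul_of_nonneg_left hmom' hK,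
    mul_nonneg (mul_nonneg (sub_nonneg.2 hηB) hη) hBq]

theorem iInf_integral_norm_gradient_le [IsProbabilityMeasure μ] (ℱ : Filtration ℕ mΩ)
    (hF : Differentiable ℝ F) (hlip : LipschitzWith K (gradient F)) (hlow : ∀ x, c ≤ F x)
    {w a : ℕ → Ω → E} {η : ℕ → ℝ} {ρ A' B' C' : ℝ} (hρ : 0 < ρ) (hA' : 0 ≤ A') (hC' : 0 ≤ C')
    (hη : Antitone η) (hη0 : ∀ k, 0 < η k) (hηB : ∀ k, K * B' * η k ≤ ρ)
    (hw_meas : ∀ k, StronglyMeasurable[ℱ k] (w k)) (hw0 : MemLp (w 0) 2 μ)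
    (ha : ∀ k, Integrable (fun ω => ‖a k ω‖ ^ 2) μ)
    (hupdate : ∀ k ω, w (k + 1) ω = w k ω - η k • a k ω)
    (hdir : ∀ k, ∀ᵐ ω ∂μ,
      ρ * ‖gradient F (w k ω)‖ ^ 2 ≤ ⟪(μ[a k|ℱ k]) ω, gradient F (w k ω)⟫)
    (hmom : ∀ k, ∀ᵐ ω ∂μ, (μ[fun ω' => ‖a k ω'‖ ^ 2|ℱ k]) ω ≤
      2 * A' * (F (w k ω) - c) + B' * ‖gradient F (w k ω)‖ ^ 2 + C')
    {N : ℕ} (hN : 0 < N) :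
    ⨅ k : Fin N, ∫ ω, ‖gradient F (w k ω)‖ ∂μ ≤
      (Real.exp (K * A' * ∑ k ∈ range N, η k ^ 2) *
          (2 * (∫ ω, F (w 0 ω) ∂μ - c) + K * C' * ∑ k ∈ range N, η k ^ 2) /
        (ρ * N * η (N - 1))) ^ ((1 : ℝ) / 2) := by
  have ha2 : ∀ k, MemLp (a k) 2 μ := fun k => (memLp_two_iff_integrable_sq_norm
    (aestronglyMeasurable_of_eq_sub_smul (hη0 k).ne'
      ((hw_meas k).mono (ℱ.le k)).aestronglyMeasurable
      ((hw_meas (k + 1)).mono (ℱ.le _)).aestronglyMeasurable (hupdate k))).2 (ha k)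
  have hw2 : ∀ k, MemLp (w k) 2 μ := memLp_of_succ_eq_sub_smul hw0 ha2 hupdate
  have hD : ∀ k, 0 ≤ ∫ ω, F (w k ω) ∂μ - c := fun k => sub_nonneg.2 <| by
    simpa using integral_mono (integrable_const c)
      (integrable_comp_of_lipschitzWith_gradient hF hlip hlow (hw2 k)) fun ω => hlow _
  refine iInf_integral_norm_le_of_recurrence (fun k => hlip.memLp_comp (hw2 k)) hρ
    (by positivity) (by positivity) hD hη hη0 (fun k => ?_) hN
  simpa only [← hupdate] using integral_comp_sub_smul_sub_le (ℱ.le k) hF hlip hlow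
    (hw_meas k) (hw2 k) (ha2 k) (hη0 k).le (hηB k) (hdir k) (hmom k)

end StochasticDescent

theorem brsgd_rate_bound_general
    {Ω : Type*} {mΩ : MeasurableSpace Ω} {μ : Measure Ω} [IsProbabilityMeasure μ]
    (ℱ : Filtration ℕ mΩ)
    (d : ℕ)
    (F : EuclideanSpace ℝ (Fin d) → ℝ) (L : ℝ) (hL : 0 < L)
    (hF_diff : Differentiable ℝ F)
    (hF_lip : ∀ x y, ‖gradient F x - gradient F y‖ ≤ L * ‖x - y‖)
    (Flow : ℝ) (hF_low : ∀ x, Flow ≤ F x)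
    (α : ℝ) (hα0 : 0 ≤ α) (hα1 : α < Real.pi / 2)
    (E' A B C : ℝ) (hE' : 0 ≤ E') (hA : 0 ≤ A) (hC : 0 ≤ C)
    (hBE' : 0 < B * E') (p : ℝ) (hp1 : 1 / 2 < p)
    (lr : ℕ → ℝ)
    (hlr : ∀ k : ℕ, lr k = (1 - Real.sin α) / (L * B * E' * ((k : ℝ) + 1) ^ p))
    (w Agg G : ℕ → Ω → EuclideanSpace ℝ (Fin d))
    (hw_meas : ∀ k, StronglyMeasurable[ℱ k] (w k))
    (hAgg_int : ∀ k, Integrable (fun ω => ‖Agg k ω‖ ^ 2) μ)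
    (hupdate : ∀ k, ∀ ω, w (k + 1) ω = w k ω - lr k • Agg k ω)
    (hi : ∀ k, ∀ᵐ ω ∂μ,
      ⟪(μ[Agg k|ℱ k]) ω, gradient F (w k ω)⟫ ≥
        (1 - Real.sin α) * ‖gradient F (w k ω)‖ ^ 2)
    (hii : ∀ k, ∀ᵐ ω ∂μ,
      (μ[(fun ω' => ‖Agg k ω'‖ ^ 2)|ℱ k]) ω ≤ E' * (μ[(fun ω' => ‖G k ω'‖ ^ 2)|ℱ k]) ω)
    (hiv : ∀ k, ∀ᵐ ω ∂μ,
      (μ[(fun ω' => ‖G k ω'‖ ^ 2)|ℱ k]) ω ≤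
        2 * A * (F (w k ω) - Flow) + B * ‖gradient F (w k ω)‖ ^ 2 + C)
    (w0 : EuclideanSpace ℝ (Fin d)) (hw0 : ∀ ω, w 0 ω = w0)
    (K : ℕ) (hK : 1 ≤ K) :
    (⨅ k : Fin K, ∫ ω, ‖gradient F (w k ω)‖ ∂μ) ≤
      (Real.exp (L * (A * E') * ∑ k ∈ Finset.range K, (lr k) ^ 2) *
          (2 * (F w0 - Flow) + L * (C * E') * ∑ k ∈ Finset.range K, (lr k) ^ 2) /
        ((1 - Real.sin α) * (K : ℝ) * lr (K - 1))) ^ ((1 : ℝ) / 2) := by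
  have hρ : 0 < 1 - Real.sin α :=
    sub_pos.2 (Real.sin_lt_one_of_neg_pi_div_two_le_of_lt (by linarith [Real.pi_pos]) hα1)
  have hM : 0 < L * (B * E') := mul_pos hL hBE'
  have hp : 0 ≤ p := by linarith
  replace hlr : lr = fun k : ℕ => (1 - Real.sin α) / (L * (B * E') * ((k : ℝ) + 1) ^ p) := by
    ext k; rw [hlr, mul_assoc L]
  have hlip : LipschitzWith L.toNNReal (gradient F) :=
    LipschitzWith.of_dist_le_mul fun x y => by
      simpa [dist_eq_norm, Real.coe_toNNReal _ hL.le] using hF_lip x y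
  have hmom : ∀ k, ∀ᵐ ω ∂μ, (μ[fun ω' => ‖Agg k ω'‖ ^ 2|ℱ k]) ω ≤
      2 * (A * E') * (F (w k ω) - Flow) + B * E' * ‖gradient F (w k ω)‖ ^ 2 + C * E' := by
    intro k
    filter_upwards [hii k, hiv k] with ω hAgg_le hG_le
    nlinarith [mul_le_mul_of_nonneg_left hG_le hE']
  have hD0 : ∫ ω, F (w 0 ω) ∂μ = F w0 := by simp [hw0]
  have := iInf_integral_norm_gradient_le ℱ hF_diff hlip hF_low hρ (by positivity) (by positivity)
    (hlr ▸ antitone_div_mul_add_one_rpow hρ.le hM hp) (fun k => by rw [hlr]; positivity)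
    (fun k => by
      rw [hlr, Real.coe_toNNReal _ hL.le]
      exact mul_div_mul_add_one_rpow_le hρ.le hM hp k)
    hw_meas (by rw [funext hw0]; exact memLp_const w0) hAgg_int hupdate hi hmom hK
  rwa [hD0, Real.coe_toNNReal _ hL.le] at this

/-- Corollary 2 of the paper: explicit convergence-rate bound for
Byzantine Resilient SGD with learning rates `α_k = (1 - sin α)/(L·B·E'·(k+1)^p)`,
where `A' := A·E'`, `C' := C·E'`, `δ_0 := F(w_0) - F_low` (with `w_0` deterministic)
and `Q_K := ∑_{k<K} α_k²`. -/
theorem brsgd_rate_bound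
    {Ω : Type*} {mΩ : MeasurableSpace Ω} {μ : Measure Ω} [IsProbabilityMeasure μ]
    (ℱ : Filtration ℕ mΩ)
    (d : ℕ) (hd : 1 ≤ d)
    (F : EuclideanSpace ℝ (Fin d) → ℝ) (L : ℝ) (hL : 0 < L)
    (hF_diff : Differentiable ℝ F)
    (hF_lip : ∀ x y, ‖gradient F x - gradient F y‖ ≤ L * ‖x - y‖)
    (Flow : ℝ) (hF_low : ∀ x, Flow ≤ F x)
    (α : ℝ) (hα0 : 0 ≤ α) (hα1 : α < Real.pi / 2)
    (E' A B C : ℝ) (hE' : 0 ≤ E') (hA : 0 ≤ A) (hB : 0 ≤ B) (hC : 0 ≤ C)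
    (hBE' : 0 < B * E') (p : ℝ) (hp1 : 1 / 2 < p) (hp2 : p < 1)
    (lr : ℕ → ℝ)
    (hlr : ∀ k : ℕ, lr k = (1 - Real.sin α) / (L * B * E' * ((k : ℝ) + 1) ^ p))
    (w Agg G : ℕ → Ω → EuclideanSpace ℝ (Fin d))
    (hw_meas : ∀ k, StronglyMeasurable[ℱ k] (w k))
    (hAgg_int : ∀ k, Integrable (fun ω => ‖Agg k ω‖ ^ 2) μ)
    (hG_int : ∀ k, Integrable (fun ω => ‖G k ω‖ ^ 2) μ)
    (hupdate : ∀ k, ∀ ω, w (k + 1) ω = w k ω - lr k • Agg k ω)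
    (hi : ∀ k, ∀ᵐ ω ∂μ,
      ⟪(μ[Agg k|ℱ k]) ω, gradient F (w k ω)⟫ ≥
        (1 - Real.sin α) * ‖gradient F (w k ω)‖ ^ 2)
    (hii : ∀ k, ∀ᵐ ω ∂μ,
      (μ[(fun ω' => ‖Agg k ω'‖ ^ 2)|ℱ k]) ω ≤ E' * (μ[(fun ω' => ‖G k ω'‖ ^ 2)|ℱ k]) ω)
    (hiii : ∀ k, ∀ᵐ ω ∂μ, (μ[G k|ℱ k]) ω = gradient F (w k ω))
    (hiv : ∀ k, ∀ᵐ ω ∂μ,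
      (μ[(fun ω' => ‖G k ω'‖ ^ 2)|ℱ k]) ω ≤
        2 * A * (F (w k ω) - Flow) + B * ‖gradient F (w k ω)‖ ^ 2 + C)
    (w0 : EuclideanSpace ℝ (Fin d)) (hw0 : ∀ ω, w 0 ω = w0)
    (K : ℕ) (hK : 1 ≤ K) :
    (⨅ k : Fin K, ∫ ω, ‖gradient F (w k ω)‖ ∂μ) ≤
      (Real.exp (L * (A * E') * ∑ k ∈ Finset.range K, (lr k) ^ 2) *
          (2 * (F w0 - Flow) + L * (C * E') * ∑ k ∈ Finset.range K, (lr k) ^ 2) /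
        ((1 - Real.sin α) * (K : ℝ) * lr (K - 1))) ^ ((1 : ℝ) / 2) :=
  brsgd_rate_bound_general ℱ d F L hL hF_diff hF_lip Flow hF_low α hα0 hα1 E' A B C hE' hA hC hBE' p
    hp1 lr hlr w Agg G hw_meas hAgg_int hupdate hi hii hiv w0 hw0 K hK
end
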